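/- For every a > 0, λ > 0 and every ν with 0 ≤ ν < 3/4, one has ∫₀^∞ p^{4ν+1} · J₀(p a)² / (p² + λ)² dp < ∞, where J₀(z) := (1/2π) ∫₀^{2π} e^{i z cos θ} dθ. (This is the key estimate showing that the map τ ↦ (U₀(τ) K₀(√λ|·−y_k|))(y_j) belongs to H^ν(0,T) for every ν < 3/4 when y_j ≠ y_k.) -/

import Mathlib

open MeasureTheory Real Filter

/-- The Bessel function of the first kind of order `0`:
`J₀(z) = (1/2π) ∫₀^{2π} e^{i z cos θ} dθ`. -/
noncomputable def besselJ0 (z : ℝ) : ℂ :=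
  ((1 / (2 * Real.pi) : ℝ) : ℂ) *
    ∫ θ in (0:ℝ)..(2 * Real.pi), Complex.exp (Complex.I * z * Real.cos θ)

/-!
The reflections `θ ↦ θ + π` and `θ ↦ π - θ` turn `x` into `-x`, so `J₀(x)` is a sum of four
integrals `∫₀^{π/2} e^{±i x cos θ} dθ`. On `[0, δ]` such an integral is at most `δ`; on
`[δ, π/2]` the phase has derivative `-x sin θ`, of size at least `2|x|δ/π`, and one integration
by parts against `1 / sin θ` bounds it by `π / (|x| δ)`. Taking `δ = |x|^{-1/2}` gives
`|J₀(x)| ≤ 3 |x|^{-1/2}`, hence `|J₀(pa)|² = O(1/p)`. The integrand is continuous on `[0, ∞)`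
(as `4ν + 1 ≥ 0`) and `O(p^{4ν-4})` at infinity, which is integrable exactly when `ν < 3/4`.
-/

lemma intervalIntegrable_cos_div_sin_sq {a b : ℝ} (hsin : ∀ θ ∈ Set.uIcc a b, Real.sin θ ≠ 0) :
    IntervalIntegrable (fun θ => Real.cos θ / Real.sin θ ^ 2) volume a b :=
  ContinuousOn.intervalIntegrable <| Real.continuous_cos.continuousOn.div
    (Real.continuous_sin.pow 2).continuousOn fun θ hθ => pow_ne_zero 2 (hsin θ hθ)

lemma integral_cos_div_sin_sq {a b : ℝ} (hsin : ∀ θ ∈ Set.uIcc a b, Real.sin θ ≠ 0) :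
    ∫ θ in a..b, Real.cos θ / Real.sin θ ^ 2 = (Real.sin a)⁻¹ - (Real.sin b)⁻¹ := by
  have hderiv : ∀ θ ∈ Set.uIcc a b,
      HasDerivAt (fun t => -(Real.sin t)⁻¹) (Real.cos θ / Real.sin θ ^ 2) θ := fun θ hθ => by
    exact ((Real.hasDerivAt_sin θ).inv (hsin θ hθ)).neg.congr_deriv (by ring)
  rw [intervalIntegral.integral_eq_sub_of_hasDerivAt hderiv
    (intervalIntegrable_cos_div_sin_sq hsin)]
  ring

lemma norm_exp_I_mul_cos (x θ : ℝ) : ‖Complex.exp (Complex.I * x * Real.cos θ)‖ = 1 := by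
  rw [mul_assoc, ← Complex.ofReal_mul, Complex.norm_exp_I_mul_ofReal]

lemma intervalIntegrable_exp_I_mul_cos (x a b : ℝ) :
    IntervalIntegrable (fun θ => Complex.exp (Complex.I * x * Real.cos θ)) volume a b :=
  Continuous.intervalIntegrable (by fun_prop) a b

lemma hasDerivAt_exp_I_mul_cos (x θ : ℝ) :
    HasDerivAt (fun t => Complex.exp (Complex.I * x * Real.cos t))
      (-(Complex.I * x) * Real.sin θ * Complex.exp (Complex.I * x * Real.cos θ)) θ := by
  simpa [mul_comm] using
    (((Real.hasDerivAt_cos θ).ofReal_comp).const_mul (Complex.I * x)).cexp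

lemma integral_exp_I_mul_cos_add_pi (x a b : ℝ) :
    ∫ θ in (a + π)..(b + π), Complex.exp (Complex.I * x * Real.cos θ) =
      ∫ θ in a..b, Complex.exp (Complex.I * ↑(-x) * Real.cos θ) := by
  rw [← intervalIntegral.integral_comp_add_right]
  simp only [Real.cos_add_pi, Complex.ofReal_neg, mul_neg, neg_mul]

lemma integral_exp_I_mul_cos_pi_sub (x a b : ℝ) :
    ∫ θ in (π - b)..(π - a), Complex.exp (Complex.I * x * Real.cos θ) =
      ∫ θ in a..b, Complex.exp (Complex.I * ↑(-x) * Real.cos θ) := by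
  rw [← intervalIntegral.integral_comp_sub_left]
  simp only [Real.cos_pi_sub, Complex.ofReal_neg, mul_neg, neg_mul]

lemma abs_mul_norm_integral_exp_I_mul_cos_le_two_div_sin (x : ℝ) {δ : ℝ} (hδ₀ : 0 < δ)
    (hδ : δ ≤ π / 2) :
    |x| * ‖∫ θ in δ..π / 2, Complex.exp (Complex.I * x * Real.cos θ)‖ ≤ 2 / Real.sin δ := by
  set f : ℝ → ℂ := fun θ => Complex.exp (Complex.I * x * Real.cos θ)
  have hsin : ∀ θ ∈ Set.uIcc δ (π / 2), 0 < Real.sin θ := fun θ hθ => by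
    rw [Set.uIcc_of_le hδ] at hθ
    exact Real.sin_pos_of_pos_of_lt_pi (hδ₀.trans_le hθ.1) (by linarith [hθ.2, Real.pi_pos])
  have hu : ∀ θ ∈ Set.uIcc δ (π / 2), HasDerivAt (fun t => (((Real.sin t)⁻¹ : ℝ) : ℂ))
      ((-Real.cos θ / Real.sin θ ^ 2 : ℝ) : ℂ) θ := fun θ hθ =>
    ((Real.hasDerivAt_sin θ).inv (hsin θ hθ).ne').ofReal_comp
  -- integrate by parts against `1 / sin θ`, which cancels the factor `sin θ` of `f'`
  have hibp := intervalIntegral.integral_mul_deriv_eq_deriv_mul hu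
    (fun θ _ => hasDerivAt_exp_I_mul_cos x θ)
    (ContinuousOn.intervalIntegrable (by
      refine Complex.continuous_ofReal.comp_continuousOn ?_
      exact Real.continuous_cos.continuousOn.neg.div (Real.continuous_sin.pow 2).continuousOn
        fun θ hθ => pow_ne_zero 2 (hsin θ hθ).ne'))
    (Continuous.intervalIntegrable (by fun_prop) _ _)
  have hlhs : ∫ θ in δ..π / 2, (((Real.sin θ)⁻¹ : ℝ) : ℂ) * (-(Complex.I * x) * Real.sin θ * f θ) =
      -(Complex.I * x) * ∫ θ in δ..π / 2, f θ := by
    rw [← intervalIntegral.integral_const_mul]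
    refine intervalIntegral.integral_congr fun θ hθ => ?_
    have : Complex.sin θ ≠ 0 := by exact_mod_cast (hsin θ hθ).ne'
    push_cast
    field_simp
  have hrem : ‖∫ θ in δ..π / 2, ((-Real.cos θ / Real.sin θ ^ 2 : ℝ) : ℂ) * f θ‖ ≤
      (Real.sin δ)⁻¹ - 1 := by
    calc _ ≤ ∫ θ in δ..π / 2, Real.cos θ / Real.sin θ ^ 2 := by
          refine intervalIntegral.norm_integral_le_of_norm_le hδ
            (Eventually.of_forall fun θ hθ => ?_) ?_
          · have hcos : 0 ≤ Real.cos θ := Real.cos_nonneg_of_neg_pi_div_two_le_of_le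
              (by linarith [hδ₀, hθ.1, Real.pi_pos]) hθ.2
            rw [norm_mul, norm_exp_I_mul_cos, mul_one, Complex.norm_real, Real.norm_eq_abs,
              neg_div, abs_neg, abs_of_nonneg (by positivity)]
          · exact intervalIntegrable_cos_div_sin_sq fun θ hθ => (hsin θ hθ).ne'
      _ = (Real.sin δ)⁻¹ - 1 := by
          rw [integral_cos_div_sin_sq fun θ hθ => (hsin θ hθ).ne', Real.sin_pi_div_two, inv_one]
  have hsinδ : 0 < Real.sin δ := hsin δ Set.left_mem_uIcc
  calc |x| * ‖∫ θ in δ..π / 2, f θ‖ = ‖-(Complex.I * x) * ∫ θ in δ..π / 2, f θ‖ := by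
        simp
    _ ≤ ‖(((Real.sin (π / 2))⁻¹ : ℝ) : ℂ) * f (π / 2)‖ + ‖(((Real.sin δ)⁻¹ : ℝ) : ℂ) * f δ‖ +
        ‖∫ θ in δ..π / 2, ((-Real.cos θ / Real.sin θ ^ 2 : ℝ) : ℂ) * f θ‖ := by
        rw [← hlhs, hibp]
        exact norm_sub_le_of_le (norm_sub_le _ _) le_rfl
    _ ≤ 1 + (Real.sin δ)⁻¹ + ((Real.sin δ)⁻¹ - 1) := by
        simp only [norm_mul, f, norm_exp_I_mul_cos, mul_one, Complex.norm_real, Real.norm_eq_abs,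
          Real.sin_pi_div_two, inv_one, abs_one, abs_inv, abs_of_pos hsinδ]
        gcongr
    _ = 2 / Real.sin δ := by ring

lemma norm_integral_exp_I_mul_cos_zero_pi_div_two_le {x : ℝ} (hx : 1 ≤ |x|) :
    ‖∫ θ in (0:ℝ)..π / 2, Complex.exp (Complex.I * x * Real.cos θ)‖ ≤ (1 + π) / √|x| := by
  set f : ℝ → ℂ := fun θ => Complex.exp (Complex.I * x * Real.cos θ)
  set s := √|x|
  have hs1 : 1 ≤ s := Real.one_le_sqrt.mpr hx
  have hs2 : s ^ 2 = |x| := Real.sq_sqrt (abs_nonneg x)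
  set δ := s⁻¹
  have hδ₀ : 0 < δ := by positivity
  have hδ₁ : δ ≤ 1 := inv_le_one_of_one_le₀ hs1
  have hδ : δ ≤ π / 2 := by linarith [Real.pi_gt_three]
  have hstart : ‖∫ θ in (0:ℝ)..δ, f θ‖ ≤ δ := by
    have := intervalIntegral.norm_integral_le_of_norm_le_const (f := f) (a := 0) (b := δ)
      fun θ _ => (norm_exp_I_mul_cos x θ).le
    rwa [sub_zero, one_mul, abs_of_pos hδ₀] at this
  have hrest : ‖∫ θ in δ..π / 2, f θ‖ ≤ π / s := by
    have hsin : 2 / π * δ ≤ Real.sin δ := Real.mul_le_sin hδ₀.le hδ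
    have hsinδ : 0 < Real.sin δ := (by positivity : 0 < 2 / π * δ).trans_le hsin
    have hosc : s ^ 2 * ‖∫ θ in δ..π / 2, f θ‖ ≤ 2 / Real.sin δ :=
      hs2 ▸ abs_mul_norm_integral_exp_I_mul_cos_le_two_div_sin x hδ₀ hδ
    have hπs : 2 / Real.sin δ ≤ π * s := by
      rw [div_le_iff₀ hsinδ]
      calc (2:ℝ) = π * s * (2 / π * δ) := by
            field_simp
            exact (mul_inv_cancel₀ (by positivity)).symm
        _ ≤ π * s * Real.sin δ := by gcongr
    rw [le_div_iff₀ (by positivity)]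
    refine le_of_mul_le_mul_left ?_ (by positivity : 0 < s)
    linarith [hosc, hπs]
  calc ‖∫ θ in (0:ℝ)..π / 2, f θ‖ = ‖(∫ θ in (0:ℝ)..δ, f θ) + ∫ θ in δ..π / 2, f θ‖ := by
        rw [intervalIntegral.integral_add_adjacent_intervals
          (intervalIntegrable_exp_I_mul_cos x _ _) (intervalIntegrable_exp_I_mul_cos x _ _)]
    _ ≤ δ + π / s := (norm_add_le _ _).trans (add_le_add hstart hrest)
    _ = (1 + π) / s := by rw [add_div, one_div]

lemma integral_exp_I_mul_cos_zero_pi (x : ℝ) :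
    ∫ θ in (0:ℝ)..π, Complex.exp (Complex.I * x * Real.cos θ) =
      (∫ θ in (0:ℝ)..π / 2, Complex.exp (Complex.I * x * Real.cos θ)) +
        ∫ θ in (0:ℝ)..π / 2, Complex.exp (Complex.I * ↑(-x) * Real.cos θ) := by
  have hreflect := integral_exp_I_mul_cos_pi_sub x 0 (π / 2)
  rw [sub_zero, sub_half] at hreflect
  rw [← hreflect, intervalIntegral.integral_add_adjacent_intervals
    (intervalIntegrable_exp_I_mul_cos x _ _) (intervalIntegrable_exp_I_mul_cos x _ _)]

lemma integral_exp_I_mul_cos_zero_two_pi (x : ℝ) :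
    ∫ θ in (0:ℝ)..2 * π, Complex.exp (Complex.I * x * Real.cos θ) =
      (∫ θ in (0:ℝ)..π, Complex.exp (Complex.I * x * Real.cos θ)) +
        ∫ θ in (0:ℝ)..π, Complex.exp (Complex.I * ↑(-x) * Real.cos θ) := by
  have hshift := integral_exp_I_mul_cos_add_pi x 0 π
  rw [zero_add, ← two_mul] at hshift
  rw [← hshift, intervalIntegral.integral_add_adjacent_intervals
    (intervalIntegrable_exp_I_mul_cos x _ _) (intervalIntegrable_exp_I_mul_cos x _ _)]

lemma norm_integral_exp_I_mul_cos_zero_two_pi_le {x : ℝ} (hx : 1 ≤ |x|) :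
    ‖∫ θ in (0:ℝ)..2 * π, Complex.exp (Complex.I * x * Real.cos θ)‖ ≤ 4 * (1 + π) / √|x| := by
  have hx' : 1 ≤ |-x| := (abs_neg x).symm ▸ hx
  have h := norm_integral_exp_I_mul_cos_zero_pi_div_two_le hx
  have h' := norm_integral_exp_I_mul_cos_zero_pi_div_two_le hx'
  rw [abs_neg] at h'
  rw [integral_exp_I_mul_cos_zero_two_pi, integral_exp_I_mul_cos_zero_pi,
    integral_exp_I_mul_cos_zero_pi, neg_neg]
  calc _ ≤ (1 + π) / √|x| + (1 + π) / √|x| + ((1 + π) / √|x| + (1 + π) / √|x|) :=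
        (norm_add_le _ _).trans (add_le_add ((norm_add_le _ _).trans (add_le_add h h'))
          ((norm_add_le _ _).trans (add_le_add h' h)))
    _ = 4 * (1 + π) / √|x| := by ring

lemma norm_besselJ0_le {x : ℝ} (hx : 1 ≤ |x|) : ‖besselJ0 x‖ ≤ 3 / √|x| := by
  rw [besselJ0, norm_mul, Complex.norm_real, Real.norm_of_nonneg (by positivity)]
  calc _ ≤ 1 / (2 * π) * (4 * (1 + π) / √|x|) := by
        gcongr; exact norm_integral_exp_I_mul_cos_zero_two_pi_le hx
    _ = (2 / π + 2) / √|x| := by field_simp; ring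
    _ ≤ 3 / √|x| := by
        gcongr
        linarith [(div_le_one Real.pi_pos).mpr (by linarith [Real.pi_gt_three] : 2 ≤ π)]

lemma continuous_besselJ0 : Continuous besselJ0 :=
  continuous_const.mul <| intervalIntegral.continuous_parametric_intervalIntegral_of_continuous'
    (by fun_prop) 0 (2 * π)

lemma rpow_mul_norm_besselJ0_sq_div_le {a lam s p : ℝ} (ha : 0 < a) (hlam : 0 ≤ lam)
    (hp : 1 ≤ p * a) :
    p ^ s * ‖besselJ0 (p * a)‖ ^ 2 / (p ^ 2 + lam) ^ 2 ≤ 9 / a * p ^ (s - 5) := by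
  have hpa : 0 < p * a := one_pos.trans_le hp
  have hp0 : 0 < p := pos_of_mul_pos_left hpa ha.le
  have hJ : ‖besselJ0 (p * a)‖ ^ 2 ≤ 9 / (p * a) := by
    have h := norm_besselJ0_le (x := p * a) (by rwa [abs_of_pos hpa])
    rw [abs_of_pos hpa] at h
    calc _ ≤ (3 / √(p * a)) ^ 2 := by gcongr
      _ = 9 / (p * a) := by rw [div_pow, Real.sq_sqrt hpa.le]; norm_num
  have hden : p ^ 4 ≤ (p ^ 2 + lam) ^ 2 := by nlinarith [sq_nonneg p]
  calc _ ≤ p ^ s * (9 / (p * a)) / p ^ 4 := by gcongr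
    _ = 9 / a * p ^ (s - 5) := by
        rw [Real.rpow_sub hp0, Real.rpow_ofNat]
        field_simp

/-- For `a > 0`, `λ > 0` and `0 ≤ ν < 3/4`, one has
`∫₀^∞ p^(4ν+1) J₀(pa)²/(p²+λ)² dp < ∞`. -/
theorem besselJ0_weighted_square_integrable (a lam ν : ℝ)
    (ha : 0 < a) (hlam : 0 < lam) (hν₀ : 0 ≤ ν) (hν : ν < 3 / 4) :
    IntegrableOn
      (fun p : ℝ => p ^ (4 * ν + 1) * ‖besselJ0 (p * a)‖ ^ 2 / (p ^ 2 + lam) ^ 2)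
      (Set.Ioi 0) volume := by
  have hcont : Continuous
      fun p : ℝ => p ^ (4 * ν + 1) * ‖besselJ0 (p * a)‖ ^ 2 / (p ^ 2 + lam) ^ 2 :=
    ((Real.continuous_rpow_const (by linarith)).mul
      ((continuous_besselJ0.comp (continuous_id.mul continuous_const)).norm.pow 2)).div
      (by fun_prop) fun p => by positivity
  have hdecay : (fun p : ℝ => p ^ (4 * ν + 1) * ‖besselJ0 (p * a)‖ ^ 2 / (p ^ 2 + lam) ^ 2)
      =O[atTop] fun p => p ^ (4 * ν + 1 - 5) := by
    refine Asymptotics.IsBigO.of_bound (9 / a) ?_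
    filter_upwards [eventually_ge_atTop a⁻¹, eventually_gt_atTop 0] with p hpa hp
    rw [Real.norm_of_nonneg (by positivity), Real.norm_of_nonneg (by positivity)]
    exact rpow_mul_norm_besselJ0_sq_div_le ha hlam.le ((inv_le_iff_one_le_mul₀ ha).mp hpa)
  exact ((hcont.locallyIntegrable.locallyIntegrableOn (Set.Ici 0)).integrableOn_of_isBigO_atTop
    hdecay (integrableAtFilter_rpow_atTop_iff.mpr (by linarith))).mono_set Set.Ioi_subset_Ici_self
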